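/- Let a, b, c, O be complex numbers with O² = a² + b² + c² − 2ab − 2ac − 2bc, with (c + a − b + O)(a − c + b + O) ≠ 0, with neither (a + b + c + O)/2 + 1 nor (a + b + c − O)/2 + 1 a nonpositive integer, and with none of a, b + 1, c + 1 a nonpositive integer. Then ₃F₂(a, b, c; (a + b + c + O)/2 + 1, (a + b + c − O)/2 + 1; 1) = 2 (a − c − b + O) Γ((a + b + c − O)/2 + 1) Γ((a + b + c + O)/2 + 1) / ( (c + a − b + O)(a − c + b + O) Γ(b + 1) Γ(c + 1) Γ(a) ). (The parametric excess equals 2, so the series converges.) -/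

import Mathlib

/-
The series telescopes. When `e + f = a + b + c + 2` and `e f = (a+1)(b+1)(c+1) - a b c`, the
identity `(e+n)(f+n)(n+1) + a b c = (a+n+1)(b+n+1)(c+n+1)` shows that the partial sums are
`(a+1)ₙ (b+1)ₙ (c+1)ₙ / ((e)ₙ (f)ₙ n!)`. Since `(s)ₙ ~ n! n^(s-1) / Γ(s)` and the exponents cancel,
these tend to `Γ(e) Γ(f) / (Γ(a+1) Γ(b+1) Γ(c+1))`; the same closed form shows that the terms are
`O(n⁻³)`, so the series converges absolutely. For `e, f = (a+b+c ± O)/2 + 1` both conditions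
hold, and `(c+a-b+O)(a-c+b+O) = 2a(a-b-c+O)` turns this value into the stated one.
-/

open Complex Finset

/-- The generalized hypergeometric series ₃F₂(a₁,a₂,a₃; b₁,b₂; 1) over ℂ. -/
noncomputable def hyp3F2 (a₁ a₂ a₃ b₁ b₂ : ℂ) : ℂ :=
  ∑' k : ℕ,
    ((ascPochhammer ℂ k).eval a₁ * (ascPochhammer ℂ k).eval a₂ * (ascPochhammer ℂ k).eval a₃) /
    ((ascPochhammer ℂ k).eval b₁ * (ascPochhammer ℂ k).eval b₂ * (Nat.factorial k : ℂ))

/-- `x` is not a nonpositive integer (equivalently, not a pole of Γ). -/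
def NotNonposInt (x : ℂ) : Prop := ∀ m : ℕ, x ≠ -(m : ℂ)

open Filter Topology Asymptotics
open scoped Nat

lemma ascPochhammer_eval_eq_prod_range {S : Type*} [CommSemiring S] (n : ℕ) (x : S) :
    (ascPochhammer S n).eval x = ∏ j ∈ range n, (x + j) := by
  induction n with
  | zero => simp
  | succ n ih => rw [ascPochhammer_succ_eval, ih, prod_range_succ]

lemma ascPochhammer_eval_ne_zero_of_notNonposInt {x : ℂ} (hx : NotNonposInt x) (n : ℕ) :
    (ascPochhammer ℂ n).eval x ≠ 0 := by
  rw [Ne, ascPochhammer_eval_eq_zero_iff]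
  rintro ⟨k, -, hk⟩
  exact hx k (by rw [hk, neg_neg])

lemma ascPochhammer_succ_eval_eq_mul {S : Type*} [CommSemiring S] (n : ℕ) (x : S) :
    (ascPochhammer S (n + 1)).eval x = x * (ascPochhammer S n).eval (x + 1) := by
  simp [ascPochhammer_succ_left]

lemma tendsto_ascPochhammer_div_factorial_mul_cpow (s : ℂ) :
    Tendsto (fun n : ℕ => (ascPochhammer ℂ n).eval s / (n ! * (n : ℂ) ^ (s - 1))) atTop
      (𝓝 (Gamma s)⁻¹) := by
  by_cases hs : NotNonposInt s
  · have hΓ : Gamma s ≠ 0 := Gamma_ne_zero hs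
    have := (tendsto_natCast_div_add_atTop s).div (GammaSeq_tendsto_Gamma s) hΓ
    rw [one_div] at this
    refine this.congr' ?_
    filter_upwards [eventually_ne_atTop 0] with n hn
    have hn' : (n : ℂ) ≠ 0 := Nat.cast_ne_zero.mpr hn
    have hsn : (n : ℂ) + s ≠ 0 := by
      rw [add_comm]; exact fun h => hs n (eq_neg_of_add_eq_zero_left h)
    have hpoch := ascPochhammer_eval_ne_zero_of_notNonposInt hs n
    have hcpow : (n : ℂ) ^ s ≠ 0 := by simp [cpow_eq_zero_iff, hn']
    rw [Pi.div_apply, GammaSeq, prod_range_succ, ← ascPochhammer_eval_eq_prod_range,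
      cpow_sub _ _ hn', cpow_one]
    field_simp
    ring
  · obtain ⟨m, rfl⟩ : ∃ m : ℕ, s = -m := by simpa [NotNonposInt] using hs
    rw [Gamma_neg_nat_eq_zero, inv_zero]
    refine tendsto_const_nhds.congr' ?_
    filter_upwards [eventually_gt_atTop m] with n hn
    rw [ascPochhammer_eval_neg_coe_nat_of_lt hn, zero_div]

noncomputable def hyp3F2Term (a₁ a₂ a₃ b₁ b₂ : ℂ) (k : ℕ) : ℂ :=
  ((ascPochhammer ℂ k).eval a₁ * (ascPochhammer ℂ k).eval a₂ * (ascPochhammer ℂ k).eval a₃) /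
    ((ascPochhammer ℂ k).eval b₁ * (ascPochhammer ℂ k).eval b₂ * (k ! : ℂ))

-- Gosper's closed form for the partial sums when `e + f = a + b + c + 2` and
-- `e * f = (a + 1) * (b + 1) * (c + 1) - a * b * c`.
noncomputable def gosperSum (a b c e f : ℂ) (n : ℕ) : ℂ :=
  (ascPochhammer ℂ n).eval (a + 1) * (ascPochhammer ℂ n).eval (b + 1) *
      (ascPochhammer ℂ n).eval (c + 1) /
    ((ascPochhammer ℂ n).eval e * (ascPochhammer ℂ n).eval f * (n ! : ℂ))

lemma isBigO_inv_add_natCast (z : ℂ) :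
    (fun n : ℕ => (z + n)⁻¹) =O[atTop] (fun n : ℕ => (n : ℝ)⁻¹) := by
  have hC : (fun n : ℕ => (n : ℂ)⁻¹) =O[atTop] (fun n : ℕ => (n : ℝ)⁻¹) :=
    isBigO_of_le _ fun n => by simp
  refine (((tendsto_natCast_div_add_atTop z).isBigO_one ℝ).mul hC).congr' ?_ (by simp)
  filter_upwards [eventually_ne_atTop 0] with n hn
  have hn' : (n : ℂ) ≠ 0 := Nat.cast_ne_zero.mpr hn
  rw [div_eq_mul_inv, mul_right_comm, mul_inv_cancel₀ hn', one_mul, add_comm]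

section Gosper

variable {a b c e f : ℂ}

lemma hyp3F2Term_succ (n : ℕ) :
    hyp3F2Term a b c e f (n + 1) =
      a * b * c * gosperSum a b c e f n / ((e + n) * (f + n) * (n + 1)) := by
  rw [hyp3F2Term, gosperSum, ascPochhammer_succ_eval_eq_mul n a,
    ascPochhammer_succ_eval_eq_mul n b, ascPochhammer_succ_eval_eq_mul n c,
    ascPochhammer_succ_eval n e, ascPochhammer_succ_eval n f,
    Nat.factorial_succ, Nat.cast_mul, Nat.cast_succ]
  simp only [div_eq_mul_inv, mul_inv]
  ring

lemma gosperSum_succ (n : ℕ) :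
    gosperSum a b c e f (n + 1) = gosperSum a b c e f n *
      ((a + 1 + n) * (b + 1 + n) * (c + 1 + n) / ((e + n) * (f + n) * (n + 1))) := by
  simp only [gosperSum, ascPochhammer_succ_eval, Nat.factorial_succ, Nat.cast_mul,
    Nat.cast_succ, div_eq_mul_inv, mul_inv]
  ring

lemma sum_range_hyp3F2Term_eq_gosperSum (hsum : e + f = a + b + c + 2)
    (hprod : e * f = (a + 1) * (b + 1) * (c + 1) - a * b * c)
    (he : NotNonposInt e) (hf : NotNonposInt f) (n : ℕ) :
    ∑ k ∈ range (n + 1), hyp3F2Term a b c e f k = gosperSum a b c e f n := by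
  induction n with
  | zero => simp [hyp3F2Term, gosperSum]
  | succ n ih =>
    have hen : e + n ≠ 0 := fun h => he n (eq_neg_of_add_eq_zero_left h)
    have hfn : f + n ≠ 0 := fun h => hf n (eq_neg_of_add_eq_zero_left h)
    have hn : (n : ℂ) + 1 ≠ 0 := Nat.cast_add_one_ne_zero n
    have hstep : (e + n) * (f + n) * (n + 1) + a * b * c =
        (a + 1 + n) * (b + 1 + n) * (c + 1 + n) := by
      linear_combination (n + 1) * hprod + (n + 1) * n * hsum
    rw [sum_range_succ, ih, hyp3F2Term_succ, gosperSum_succ, ← hstep]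
    field_simp

lemma tendsto_gosperSum (hsum : e + f = a + b + c + 2) (he : NotNonposInt e)
    (hf : NotNonposInt f) :
    Tendsto (gosperSum a b c e f) atTop
      (𝓝 (Gamma e * Gamma f / (Gamma (a + 1) * Gamma (b + 1) * Gamma (c + 1)))) := by
  set P : ℂ → ℕ → ℂ := fun s n => (ascPochhammer ℂ n).eval s / (n ! * (n : ℂ) ^ (s - 1))
  have hP : ∀ s, Tendsto (P s) atTop (𝓝 (Gamma s)⁻¹) :=
    tendsto_ascPochhammer_div_factorial_mul_cpow
  have hlim := ((hP (a + 1)).mul (hP (b + 1))).mul (hP (c + 1)) |>.div ((hP e).mul (hP f))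
    (mul_ne_zero (inv_ne_zero (Gamma_ne_zero he)) (inv_ne_zero (Gamma_ne_zero hf)))
  convert hlim.congr' ?_ using 2
  · field_simp
  filter_upwards [eventually_ne_atTop 0] with n hn
  have hn' : (n : ℂ) ≠ 0 := Nat.cast_ne_zero.mpr hn
  have hpow : (n : ℂ) ^ (e - 1) * (n : ℂ) ^ (f - 1) =
      (n : ℂ) ^ a * (n : ℂ) ^ b * (n : ℂ) ^ c := by
    rw [← cpow_add _ _ hn', ← cpow_add _ _ hn', ← cpow_add _ _ hn']
    congr 1
    linear_combination hsum
  have hpoche := ascPochhammer_eval_ne_zero_of_notNonposInt he n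
  have hpochf := ascPochhammer_eval_ne_zero_of_notNonposInt hf n
  have hfact : (n ! : ℂ) ≠ 0 := Nat.cast_ne_zero.mpr n.factorial_ne_zero
  have hcpow : ∀ s : ℂ, (n : ℂ) ^ s ≠ 0 := fun s => by simp [cpow_eq_zero_iff, hn']
  simp only [P, gosperSum, Pi.div_apply, add_sub_cancel_right]
  field_simp
  rw [mul_assoc _ ((n : ℂ) ^ (e - 1)), hpow,
    mul_div_cancel_right₀ _ (mul_ne_zero (mul_ne_zero (hcpow a) (hcpow b)) (hcpow c))]

lemma summable_hyp3F2Term_of_tendsto_gosperSum {L : ℂ}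
    (hL : Tendsto (gosperSum a b c e f) atTop (𝓝 L)) :
    Summable (hyp3F2Term a b c e f) := by
  rw [← summable_nat_add_iff 1]
  have hbigO : (fun n : ℕ => hyp3F2Term a b c e f (n + 1)) =O[atTop]
      (fun n : ℕ => (1 : ℝ) * (n : ℝ)⁻¹ * (n : ℝ)⁻¹ * (n : ℝ)⁻¹) := by
    refine ((((hL.isBigO_one ℝ).mul (isBigO_inv_add_natCast e)).mul
      (isBigO_inv_add_natCast f)).mul (isBigO_inv_add_natCast 1)).const_mul_left (a * b * c)
      |>.congr_left fun n => ?_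
    rw [hyp3F2Term_succ, add_comm (1 : ℂ)]
    simp only [div_eq_mul_inv, mul_inv]
    ring
  refine summable_of_isBigO_nat ?_ hbigO
  simpa [← pow_succ, pow_three] using Real.summable_nat_pow_inv.mpr (by norm_num : 1 < 3)

theorem hasSum_hyp3F2Term (hsum : e + f = a + b + c + 2)
    (hprod : e * f = (a + 1) * (b + 1) * (c + 1) - a * b * c)
    (he : NotNonposInt e) (hf : NotNonposInt f) :
    HasSum (hyp3F2Term a b c e f)
      (Gamma e * Gamma f / (Gamma (a + 1) * Gamma (b + 1) * Gamma (c + 1))) := by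
  have hL := tendsto_gosperSum hsum he hf
  rw [(summable_hyp3F2Term_of_tendsto_gosperSum hL).hasSum_iff_tendsto_nat,
    ← tendsto_add_atTop_iff_nat 1]
  simpa only [sum_range_hyp3F2Term_eq_gosperSum hsum hprod he hf] using hL

theorem hyp3F2_eq_Gamma (hsum : e + f = a + b + c + 2)
    (hprod : e * f = (a + 1) * (b + 1) * (c + 1) - a * b * c)
    (he : NotNonposInt e) (hf : NotNonposInt f) :
    hyp3F2 a b c e f = Gamma e * Gamma f / (Gamma (a + 1) * Gamma (b + 1) * Gamma (c + 1)) :=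
  (hasSum_hyp3F2Term hsum hprod he hf).tsum_eq

end Gosper

theorem stmt19_general (a b c O : ℂ)
    (hO : O^2 = a^2 + b^2 + c^2 - 2*a*b - 2*a*c - 2*b*c)
    (hne : (c + a - b + O) * (a - c + b + O) ≠ 0)
    (hb1 : NotNonposInt ((a + b + c + O)/2 + 1))
    (hb2 : NotNonposInt ((a + b + c - O)/2 + 1)) :
    hyp3F2 a b c ((a + b + c + O)/2 + 1) ((a + b + c - O)/2 + 1) =
      2 * (a - c - b + O) * Complex.Gamma ((a + b + c - O)/2 + 1) *
          Complex.Gamma ((a + b + c + O)/2 + 1) /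
        ((c + a - b + O) * (a - c + b + O) * Complex.Gamma (b + 1) * Complex.Gamma (c + 1) *
          Complex.Gamma a) := by
  have hfactor : (c + a - b + O) * (a - c + b + O) = 2 * a * (a - c - b + O) := by
    linear_combination hO
  rw [hfactor] at hne ⊢
  have ha : a ≠ 0 := fun h => hne (by rw [h]; ring)
  have hK : 2 * (a - c - b + O) ≠ 0 := fun h => hne (by linear_combination a * h)
  rw [hyp3F2_eq_Gamma (by ring) (by linear_combination -hO / 4) hb1 hb2, Gamma_add_one a ha,
    ← mul_div_mul_left _ _ hK]
  ring

theorem stmt19 (a b c O : ℂ)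
    (hO : O^2 = a^2 + b^2 + c^2 - 2*a*b - 2*a*c - 2*b*c)
    (hne : (c + a - b + O) * (a - c + b + O) ≠ 0)
    (hb1 : NotNonposInt ((a + b + c + O)/2 + 1))
    (hb2 : NotNonposInt ((a + b + c - O)/2 + 1))
    (g1 : NotNonposInt a) (g2 : NotNonposInt (b + 1)) (g3 : NotNonposInt (c + 1)) :
    hyp3F2 a b c ((a + b + c + O)/2 + 1) ((a + b + c - O)/2 + 1) =
      2 * (a - c - b + O) * Complex.Gamma ((a + b + c - O)/2 + 1) *
          Complex.Gamma ((a + b + c + O)/2 + 1) /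
        ((c + a - b + O) * (a - c + b + O) * Complex.Gamma (b + 1) * Complex.Gamma (c + 1) *
          Complex.Gamma a) :=
  stmt19_general a b c O hO hne hb1 hb2
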